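/- arXiv:1912.00347 — 4 statements merged into one kernel-verified Lean document; each statement's English description precedes it below -/
import Mathlib

section
/- If k is a field that is not algebraically closed, then for every n ≥ 1 there exists a homogeneous polynomial in n variables over k whose only zero in kⁿ is the zero tuple. -/
/-!
If `k` is not algebraically closed, some polynomial `f` of degree `e ≥ 1` has no root in `k`,
so its homogenization `F(a, b) = b ^ e f(a / b)` vanishes only at `(0, 0)`. Substituting a normic
form `N` of degree `d` and the power `y ^ d` of a new variable into `F` gives the normic form
`F(N(x), y ^ d)` of degree `d e` in one more variable. Starting from the zero polynomial in no
variables, this yields normic forms of degree `e ^ n` in `n` variables.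
-/

open MvPolynomial

namespace MvPolynomial

variable {R σ τ : Type*} [CommSemiring R]

def IsNormic (P : MvPolynomial σ R) : Prop :=
  ∀ x : σ → R, eval x P = 0 ↔ x = 0

lemma IsNormic.rename_equiv {P : MvPolynomial σ R} (hP : P.IsNormic) (e : σ ≃ τ) :
    (rename e P).IsNormic := by
  intro x
  rw [eval_rename, hP]
  exact e.surjective.injective_comp_right.eq_iff (b := (0 : τ → R))

lemma isNormic_X_pow [Unique σ] [NoZeroDivisors R] {d : ℕ} (hd : d ≠ 0) :
    (X default ^ d : MvPolynomial σ R).IsNormic := by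
  intro x
  rw [eval_pow, eval_X, pow_eq_zero_iff hd]
  exact ⟨fun h ↦ _root_.funext fun i ↦ Unique.eq_default i ▸ h, fun h ↦ congrFun h default⟩

noncomputable def composeBinary (F : MvPolynomial (Fin 2) R) (P : MvPolynomial σ R)
    (Q : MvPolynomial τ R) : MvPolynomial (σ ⊕ τ) R :=
  bind₁ ![rename Sum.inl P, rename Sum.inr Q] F

lemma eval_composeBinary (F : MvPolynomial (Fin 2) R) (P : MvPolynomial σ R)
    (Q : MvPolynomial τ R) (x : σ ⊕ τ → R) :
    eval x (composeBinary F P Q) = eval ![eval (x ∘ Sum.inl) P, eval (x ∘ Sum.inr) Q] F := by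
  refine (eval₂Hom_bind₁ _ _ _ _).trans (congrArg (eval · F) ?_)
  ext i
  fin_cases i <;> simp [eval_rename]

lemma IsHomogeneous.composeBinary {F : MvPolynomial (Fin 2) R} {P : MvPolynomial σ R}
    {Q : MvPolynomial τ R} {e d : ℕ} (hF : F.IsHomogeneous e) (hP : P.IsHomogeneous d)
    (hQ : Q.IsHomogeneous d) : (composeBinary F P Q).IsHomogeneous (d * e) := by
  refine hF.aeval _ fun i ↦ ?_
  fin_cases i
  · exact hP.rename_isHomogeneous
  · exact hQ.rename_isHomogeneous

lemma IsNormic.composeBinary {F : MvPolynomial (Fin 2) R} {P : MvPolynomial σ R}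
    {Q : MvPolynomial τ R} (hF : F.IsNormic) (hP : P.IsNormic) (hQ : Q.IsNormic) :
    (composeBinary F P Q).IsNormic := by
  intro x
  rw [eval_composeBinary, hF, Matrix.cons_eq_zero_iff, Matrix.cons_eq_zero_iff, hP, hQ,
    and_iff_left (Subsingleton.elim _ _)]
  constructor
  · rintro ⟨hl, hr⟩
    rw [← Sum.elim_comp_inl_inr x, hl, hr, Sum.elim_zero_zero]
  · rintro rfl
    exact ⟨rfl, rfl⟩

lemma exists_isHomogeneous_isNormic [NoZeroDivisors R] {F : MvPolynomial (Fin 2) R} {e : ℕ}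
    (he : 0 < e) (hF : F.IsHomogeneous e) (hF' : F.IsNormic) (n : ℕ) :
    ∃ N : MvPolynomial (Fin n) R, N.IsHomogeneous (e ^ n) ∧ N.IsNormic := by
  induction n with
  | zero => exact ⟨0, isHomogeneous_zero _ _ _, fun x ↦ by simp [Subsingleton.elim x 0]⟩
  | succ m ih =>
    obtain ⟨N, hN, hN'⟩ := ih
    let L : MvPolynomial (Fin 1) R := X 0 ^ e ^ m
    refine ⟨rename finSumFinEquiv (composeBinary F N L), ?_, ?_⟩
    · rw [pow_succ]
      exact (hF.composeBinary hN (isHomogeneous_X_pow _ _)).rename_isHomogeneous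
    · exact (hF'.composeBinary hN' (isNormic_X_pow (pow_pos he m).ne')).rename_equiv _

end MvPolynomial

namespace Polynomial

variable {R K : Type*} [CommSemiring R] [Field K]

lemma eval_homogenize_of_apply_one_eq_zero (p : Polynomial R) (n : ℕ) (x : Fin 2 → R)
    (hx : x 1 = 0) :
    MvPolynomial.eval x (p.homogenize n) = p.coeff n * x 0 ^ n := by
  rw [homogenize, map_sum, Finset.sum_eq_single (n, 0)]
  · simp [MvPolynomial.eval_monomial, Finsupp.prod_fintype]
  · rintro ⟨i, j⟩ hij hne
    have hj : j ≠ 0 := by rintro rfl; simp_all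
    simp [MvPolynomial.eval_monomial, Finsupp.prod_fintype, hx, hj]
  · simp

lemma isNormic_homogenize {p : Polynomial K} (hp : 0 < p.natDegree) (hroot : ∀ x, ¬ p.IsRoot x) :
    (p.homogenize p.natDegree).IsNormic := by
  have hp0 : p ≠ 0 := ne_zero_of_natDegree_gt hp
  intro x
  by_cases hx : x 1 = 0
  · rw [eval_homogenize_of_apply_one_eq_zero _ _ _ hx, coeff_natDegree]
    simp [hp0, hp.ne', funext_iff, Fin.forall_fin_two, hx]
  · rw [eval_homogenize le_rfl _ hx]
    simp only [mul_eq_zero, pow_eq_zero_iff hp.ne', hx, or_false]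
    exact iff_of_false (hroot _) fun h ↦ hx (congrFun h 1)

end Polynomial

theorem exists_normic_form_n_vars_general (k : Type) [Field k] (h : ¬ IsAlgClosed k)
    (n : ℕ) :
    ∃ (N : MvPolynomial (Fin n) k) (d : ℕ),
      N.IsHomogeneous d ∧ ∀ x : Fin n → k, eval x N = 0 ↔ x = 0 := by
  obtain ⟨f, -, hirr, hroot⟩ :
      ∃ f : Polynomial k, f.Monic ∧ Irreducible f ∧ ∀ x, ¬ f.IsRoot x := by
    contrapose! h
    exact IsAlgClosed.of_exists_root k h
  have hdeg := hirr.natDegree_pos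
  obtain ⟨N, hN, hN'⟩ := exists_isHomogeneous_isNormic hdeg
    (Polynomial.isHomogeneous_homogenize f) (Polynomial.isNormic_homogenize hdeg hroot) n
  exact ⟨N, _, hN, hN'⟩

/-- If `k` is a field that is not algebraically closed, then for every `n ≥ 1` there exists a
homogeneous polynomial in `n` variables over `k` whose only zero in `kⁿ` is the zero tuple. -/
theorem exists_normic_form_n_vars (k : Type) [Field k] (h : ¬ IsAlgClosed k)
    (n : ℕ) (hn : 1 ≤ n) :
    ∃ (N : MvPolynomial (Fin n) k) (d : ℕ),
      N.IsHomogeneous d ∧ ∀ x : Fin n → k, eval x N = 0 ↔ x = 0 :=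
  exists_normic_form_n_vars_general k h n
end

section
/- Équinullstellensatz: Let k be any field, A a finitely generated k-algebra, and S the set of all f ∈ A such that φ(f) ≠ 0 for every k-algebra homomorphism φ: A → k. If I is an ideal of A disjoint from S and maximal among ideals disjoint from S, then I is a maximal ideal and the structural map k → A/I is an isomorphism. -/
/-!
An ideal `I` disjoint from `S` is one each of whose elements has a `k`-rational zero; the point is
that `I` then has a common `k`-rational zero `φ`, after which maximality forces `I = ker φ`.
Over an algebraically closed field this is the weak Nullstellensatz. Otherwise, a polynomial
without roots homogenizes to a binary form `F` with `F(c, d) = 0` only at `(0, 0)`; nesting `F`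
over a finite generating set of `I` produces one element of `I` whose zeros are exactly the
common zeros of `I`.
-/

open Polynomial

namespace MvPolynomial

def IsAnisotropic {σ K : Type*} [CommSemiring K] (F : MvPolynomial σ K) : Prop :=
  ∀ x : σ → K, eval x F = 0 → x = 0

theorem aeval_mem_of_constantCoeff_eq_zero {R A σ : Type*} [CommSemiring R] [CommRing A]
    [Algebra R A] {F : MvPolynomial σ R} (hF : constantCoeff F = 0) {I : Ideal A} {x : σ → A}
    (hx : ∀ i, x i ∈ I) : aeval x F ∈ I := by
  have hx0 : (fun i => Ideal.Quotient.mkₐ R I (x i)) = 0 := by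
    ext i
    exact Ideal.Quotient.eq_zero_iff_mem.2 (hx i)
  rw [← Ideal.Quotient.eq_zero_iff_mem, ← Ideal.Quotient.mkₐ_eq_mk R, comp_aeval_apply, hx0]
  simp [hF]

end MvPolynomial

namespace Polynomial

theorem constantCoeff_homogenize {R : Type*} [CommSemiring R] (p : R[X]) {n : ℕ} (hn : n ≠ 0) :
    MvPolynomial.constantCoeff (p.homogenize n) = 0 := by
  simp [MvPolynomial.constantCoeff_eq, coeff_homogenize, hn.symm]

theorem eval_homogenize_natDegree_of_eq_zero {K : Type*} [Field K] (p : K[X]) {x : Fin 2 → K}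
    (hx : x 1 = 0) :
    MvPolynomial.eval x (p.homogenize p.natDegree) = p.leadingCoeff * x 0 ^ p.natDegree := by
  simp only [homogenize, Finset.Nat.sum_antidiagonal_eq_sum_range_succ_mk, map_sum,
    MvPolynomial.eval_monomial, Finsupp.prod_pow, Finsupp.coe_update, Fin.prod_univ_two,
    Function.update_of_ne zero_ne_one, Finsupp.single_eq_same, Function.update_self, hx]
  rw [Finset.sum_range_succ, Finset.sum_eq_zero fun j hj => ?_]
  · simp
  · simp [Nat.sub_ne_zero_of_lt (Finset.mem_range.1 hj)]

theorem isAnisotropic_homogenize_natDegree {K : Type*} [Field K] {p : K[X]}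
    (hp : ∀ a, ¬ p.IsRoot a) : (p.homogenize p.natDegree).IsAnisotropic := by
  have hp0 : p ≠ 0 := by
    rintro rfl
    exact hp 0 (by simp)
  intro x h
  by_cases hx : x 1 = 0
  · rw [eval_homogenize_natDegree_of_eq_zero p hx, mul_eq_zero, leadingCoeff_eq_zero] at h
    have hx0 : x 0 = 0 := pow_eq_zero_iff'.1 (h.resolve_left hp0) |>.1
    ext i
    fin_cases i <;> assumption
  · rw [eval_homogenize le_rfl x hx, mul_eq_zero] at h
    exact (h.elim (hp _) (pow_ne_zero _ hx)).elim

end Polynomial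

theorem exists_isAnisotropic_constantCoeff_eq_zero {K : Type*} [Field K] (hK : ¬ IsAlgClosed K) :
    ∃ F : MvPolynomial (Fin 2) K, MvPolynomial.constantCoeff F = 0 ∧ F.IsAnisotropic := by
  obtain ⟨p, -, hirr, hp⟩ : ∃ p : K[X], p.Monic ∧ Irreducible p ∧ ∀ a, ¬ p.IsRoot a := by
    contrapose! hK
    exact IsAlgClosed.of_exists_root K hK
  exact ⟨_, p.constantCoeff_homogenize hirr.natDegree_pos.ne',
    isAnisotropic_homogenize_natDegree hp⟩

section

variable {K A : Type*} [Field K] [CommRing A] [Algebra K A]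

theorem exists_mem_span_forall_algHom_eq_zero {F : MvPolynomial (Fin 2) K}
    (hF0 : MvPolynomial.constantCoeff F = 0) (hF : F.IsAnisotropic) (s : Finset A) :
    ∃ g ∈ Ideal.span (s : Set A), ∀ φ : A →ₐ[K] K, φ g = 0 → ∀ f ∈ s, φ f = 0 := by
  classical
  induction s using Finset.induction_on with
  | empty => exact ⟨0, zero_mem _, by simp⟩
  | insert a s _ ih =>
    obtain ⟨g, hg, hgφ⟩ := ih
    refine ⟨MvPolynomial.aeval ![g, a] F, ?_, fun φ hφ => ?_⟩
    · refine MvPolynomial.aeval_mem_of_constantCoeff_eq_zero hF0 (Fin.forall_fin_two.2 ⟨?_, ?_⟩)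
      · exact Ideal.span_mono (by simp) hg
      · exact Ideal.subset_span (by simp)
    · rw [MvPolynomial.comp_aeval_apply] at hφ
      have h := hF _ hφ
      have hg0 : φ g = 0 := congrFun h 0
      have ha0 : φ a = 0 := congrFun h 1
      simpa [ha0] using hgφ φ hg0

theorem Ideal.FG.exists_mem_forall_algHom_eq_zero_le_ker (hK : ¬ IsAlgClosed K) {I : Ideal A}
    (hI : I.FG) : ∃ g ∈ I, ∀ φ : A →ₐ[K] K, φ g = 0 → I ≤ RingHom.ker φ := by
  obtain ⟨s, rfl⟩ := hI
  obtain ⟨F, hF0, hF⟩ := exists_isAnisotropic_constantCoeff_eq_zero hK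
  obtain ⟨g, hg, hgφ⟩ := exists_mem_span_forall_algHom_eq_zero hF0 hF s
  exact ⟨g, hg, fun φ hφ => Ideal.span_le.2 fun f hf => hgφ φ hφ f hf⟩

theorem Ideal.exists_algHom_le_ker_of_ne_top [IsAlgClosed K] [Algebra.FiniteType K A]
    {I : Ideal A} (hI : I ≠ ⊤) : ∃ φ : A →ₐ[K] K, I ≤ RingHom.ker φ := by
  obtain ⟨m, hm, hIm⟩ := I.exists_le_maximal hI
  let := Ideal.Quotient.field m
  have : Module.Finite K (A ⧸ m) := finite_of_finite_type_of_isJacobsonRing K (A ⧸ m)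
  refine ⟨(IsAlgClosed.lift : A ⧸ m →ₐ[K] K).comp (Ideal.Quotient.mkₐ K m), fun f hf => ?_⟩
  simp [Ideal.Quotient.eq_zero_iff_mem.2 (hIm hf)]

theorem Ideal.exists_algHom_le_ker_of_forall_mem [Algebra.FiniteType K A] {I : Ideal A}
    (h : ∀ f ∈ I, ∃ φ : A →ₐ[K] K, φ f = 0) : ∃ φ : A →ₐ[K] K, I ≤ RingHom.ker φ := by
  by_cases hK : IsAlgClosed K
  · refine Ideal.exists_algHom_le_ker_of_ne_top fun hI => ?_
    obtain ⟨φ, hφ⟩ := h 1 (hI ▸ Submodule.mem_top)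
    exact one_ne_zero (map_one φ ▸ hφ)
  · have := Algebra.FiniteType.isNoetherianRing K A
    obtain ⟨g, hgI, hg⟩ := Ideal.FG.exists_mem_forall_algHom_eq_zero_le_ker hK
      (IsNoetherian.noetherian I)
    obtain ⟨φ, hφ⟩ := h g hgI
    exact ⟨φ, hg φ hφ⟩

end

section

variable {R A : Type*} [CommRing R] [CommRing A] [Algebra R A]

theorem AlgHom.surjective_of_codomain_base (φ : A →ₐ[R] R) : Function.Surjective φ :=
  fun c => ⟨algebraMap R A c, φ.commutes c⟩

theorem AlgHom.bijective_algebraMap_quotient_ker (φ : A →ₐ[R] R) :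
    Function.Bijective (algebraMap R (A ⧸ RingHom.ker φ)) := by
  let e := Ideal.quotientKerAlgEquivOfSurjective φ.surjective_of_codomain_base
  convert e.symm.bijective
  ext c
  exact (e.symm.commutes c).symm

end

/-- Équinullstellensatz : Let `k` be any field, `A` a finitely generated `k`-algebra, and `S`
the set of all `f ∈ A` such that `φ(f) ≠ 0` for every `k`-algebra homomorphism `φ : A → k`.
If `I` is an ideal of `A` disjoint from `S` and maximal among ideals disjoint from `S`, then
`I` is a maximal ideal and the structural map `k → A/I` is an isomorphism. -/
theorem equinullstellensatz (k A : Type) [Field k] [CommRing A] [Algebra k A]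
    [Algebra.FiniteType k A]
    (S : Set A) (hS : S = {f : A | ∀ φ : A →ₐ[k] k, φ f ≠ 0})
    (I : Ideal A) (hdisj : (I : Set A) ∩ S = ∅)
    (hmax : ∀ J : Ideal A, I ≤ J → (J : Set A) ∩ S = ∅ → J = I) :
    I.IsMaximal ∧ Function.Bijective (algebraMap k (A ⧸ I)) := by
  subst hS
  have hzero : ∀ f ∈ I, ∃ φ : A →ₐ[k] k, φ f = 0 := by
    intro f hf
    by_contra! hφ
    exact hdisj.subset ⟨hf, hφ⟩
  obtain ⟨φ, hIφ⟩ := Ideal.exists_algHom_le_ker_of_forall_mem hzero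
  have hker : RingHom.ker φ = I :=
    hmax _ hIφ (Set.eq_empty_of_forall_notMem fun f ⟨hf, hfS⟩ => hfS φ hf)
  subst hker
  exact ⟨RingHom.ker_isMaximal_of_surjective φ φ.surjective_of_codomain_base,
    φ.bijective_algebraMap_quotient_ker⟩
end

section
/- Let A be a finitely generated algebra over a field k and I an ideal of A. Then the equiradical of I — the intersection of all maximal ideals m ⊇ I with A/m ≅ k — equals the set of a ∈ A such that I meets the multiplicative set Σ_a generated by all elements a^m · D#(b̄, aⁿ), where D ranges over polynomials over k with no rational zero in k, D# is the homogenization of D, m,n ∈ ℕ, and b̄ ranges over tuples from A. -/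
open MvPolynomial

variable (k : Type) [Field k] (A : Type) [CommRing A] [Algebra k A]

/-- `homogEval D b c` is the evaluation `D#(b, c)` in `A` of the homogenization
`D#(X̄,Y) = Y^{deg D}·D(X̄/Y)` of `D` at the tuple `b` and the element `c`. -/
noncomputable def homogEval {m : ℕ} (D : MvPolynomial (Fin m) k) (b : Fin m → A) (c : A) :
    A :=
  ∑ s ∈ D.support, algebraMap k A (D.coeff s) * (∏ i, b i ^ s i) *
    c ^ (D.totalDegree - s.sum fun _ e => e)

/-- The generating set of the multiplicative set `Σ_a`: all elements `a^m · D#(b̄, aⁿ)` for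
`D` a polynomial over `k` with no rational zero in `k`. -/
def sigmaSet (a : A) : Set A :=
  {x | ∃ (m n mv : ℕ) (D : MvPolynomial (Fin mv) k) (b : Fin mv → A),
    (∀ v : Fin mv → k, eval v D ≠ 0) ∧ x = a ^ m * homogEval k A D b (a ^ n)}

/-!
A special maximal ideal containing `I` is the kernel of a `k`-point `φ : A →ₐ[k] k` that kills `I`.
Generators of `Σ_a` do not vanish at a `k`-point where `a` does not, because
`D#(v, γ) = γ^{deg D} D(v/γ)` and `D` has no `k`-zero. Conversely, if `a` vanishes at all such
`k`-points, then `B = (A/I)[1/a]` has no `k`-points. If `k` is algebraically closed, `B = 0` by the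
Nullstellensatz; otherwise some `p ∈ k[X]` has no root, and iterating its homogenization gives forms
`F_r` with only the trivial zero, so that `F_r` applied to the relations `f̄` of a presentation
`B = k[X̄]/(f̄)` is a polynomial `D` without `k`-zeros that vanishes at the generators of `B`.
Clearing the denominators of these generators turns `D(b̄) = 0` in `B` into `a^m D#(d̄, aⁿ) ∈ I`.
-/

section homogEval

variable {k A}

theorem map_homogEval {B : Type} [CommRing B] [Algebra k B] (φ : A →ₐ[k] B) {m : ℕ}
    (D : MvPolynomial (Fin m) k) (b : Fin m → A) (c : A) :
    φ (homogEval k A D b c) = homogEval k B D (φ ∘ b) (φ c) := by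
  simp [homogEval, map_sum, map_prod]

theorem homogEval_mul_left {m : ℕ} (D : MvPolynomial (Fin m) k) (b : Fin m → A) (c : A) :
    homogEval k A D (fun i => c * b i) c = c ^ D.totalDegree * aeval b D := by
  rw [homogEval, aeval_def, eval₂_eq', Finset.mul_sum]
  refine Finset.sum_congr rfl fun s hs => ?_
  have hdeg : ∑ i, s i ≤ D.totalDegree := by
    simpa [Finsupp.sum_fintype] using le_totalDegree hs
  obtain ⟨e, he⟩ := Nat.exists_eq_add_of_le hdeg
  rw [Finset.prod_congr rfl fun i _ => mul_pow c (b i) (s i), Finset.prod_mul_distrib,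
    Finset.prod_pow_eq_pow_sum, Finsupp.sum_fintype _ _ fun _ => rfl, he,
    Nat.add_sub_cancel_left, pow_add]
  ring

theorem homogEval_ne_zero {m : ℕ} {D : MvPolynomial (Fin m) k}
    (hD : ∀ v : Fin m → k, eval v D ≠ 0) (v : Fin m → k) {γ : k} (hγ : γ ≠ 0) :
    homogEval k k D v γ ≠ 0 := by
  have hv : v = fun i => γ * (γ⁻¹ * v i) := funext fun i => by field_simp
  rw [hv, homogEval_mul_left]
  exact mul_ne_zero (pow_ne_zero _ hγ) (hD _)

end homogEval

theorem IsAlgClosed.nonempty_algHom_of_finiteType (K B : Type*) [Field K] [IsAlgClosed K]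
    [CommRing B] [Nontrivial B] [Algebra K B] [Algebra.FiniteType K B] :
    Nonempty (B →ₐ[K] K) := by
  obtain ⟨m, hm⟩ := Ideal.exists_maximal B
  let _ : Field (B ⧸ m) := Ideal.Quotient.field m
  have := finite_of_finite_type_of_isJacobsonRing K (B ⧸ m)
  let e := AlgEquiv.ofBijective (Algebra.ofId K (B ⧸ m)) algebraMap_bijective_of_isIntegral
  exact ⟨e.symm.toAlgHom.comp (Ideal.Quotient.mkₐ K m)⟩

theorem exists_rootless_of_not_isAlgClosed {K : Type*} [Field K] (h : ¬IsAlgClosed K) :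
    ∃ p : Polynomial K, 0 < p.natDegree ∧ ∀ t, ¬p.IsRoot t := by
  contrapose! h
  exact IsAlgClosed.of_exists_root _ fun p _ hirr => h p hirr.natDegree_pos

theorem nonempty_algHom_of_ker_le {R P B C : Type*} [CommRing R] [CommRing P] [CommRing B]
    [CommRing C] [Algebra R P] [Algebra R B] [Algebra R C] {ψ : P →ₐ[R] B}
    (hψ : Function.Surjective ψ) (χ : P →ₐ[R] C) (h : RingHom.ker ψ ≤ RingHom.ker χ) :
    Nonempty (B →ₐ[R] C) :=
  ⟨(Ideal.Quotient.liftₐ _ χ h).comp (Ideal.quotientKerAlgEquivOfSurjective hψ).symm.toAlgHom⟩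

namespace Polynomial

variable {K : Type*} [Field K]

theorem eval_homogenize_of_eq_zero (p : K[X]) {x : Fin 2 → K} (hx : x 1 = 0) :
    MvPolynomial.eval x (p.homogenize p.natDegree) = p.leadingCoeff * x 0 ^ p.natDegree := by
  simp only [homogenize, Finset.Nat.sum_antidiagonal_eq_sum_range_succ_mk, map_sum,
    MvPolynomial.eval_monomial]
  rw [Finset.sum_eq_single p.natDegree]
  · simp [Finsupp.prod_fintype, Fin.prod_univ_two]
  · intro i _ hi
    have : p.natDegree - i ≠ 0 := by grind
    simp [Finsupp.prod_fintype, Fin.prod_univ_two, hx, this]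
  · simp

theorem eval_homogenize_eq_zero_iff {p : K[X]} (hp : 0 < p.natDegree)
    (hroot : ∀ t, ¬p.IsRoot t) (x : Fin 2 → K) :
    MvPolynomial.eval x (p.homogenize p.natDegree) = 0 ↔ x = 0 := by
  have hp0 : p ≠ 0 := ne_zero_of_natDegree_gt hp
  by_cases hx : x 1 = 0
  · rw [eval_homogenize_of_eq_zero p hx, mul_eq_zero, pow_eq_zero_iff hp.ne']
    simp [hp0, funext_iff, Fin.forall_fin_two, hx]
  · rw [eval_homogenize le_rfl x hx]
    simpa [hx, funext_iff, Fin.forall_fin_two] using hroot _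

noncomputable def anisotropicForm (p : K[X]) : (r : ℕ) → MvPolynomial (Fin r) K
  | 0 => 0
  | r + 1 => bind₁ ![rename Fin.castSucc (p.anisotropicForm r), .X (Fin.last r)]
      (p.homogenize p.natDegree)

theorem eval_anisotropicForm_eq_zero_iff {p : K[X]} (hp : 0 < p.natDegree)
    (hroot : ∀ t, ¬p.IsRoot t) {r : ℕ} (u : Fin r → K) :
    MvPolynomial.eval u (p.anisotropicForm r) = 0 ↔ u = 0 := by
  induction r with
  | zero => simp [anisotropicForm, funext_iff]
  | succ r ih =>
    rw [anisotropicForm, MvPolynomial.eval, eval₂Hom_bind₁, ← MvPolynomial.eval,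
      eval_homogenize_eq_zero_iff hp hroot]
    simp [funext_iff, Fin.forall_fin_succ', eval_rename, ih]

end Polynomial

theorem exists_aeval_eq_zero_of_isEmpty_algHom {K B : Type*} [Field K] [CommRing B]
    [Algebra K B] [Algebra.FiniteType K B] (hB : IsEmpty (B →ₐ[K] K)) :
    ∃ (mv : ℕ) (D : MvPolynomial (Fin mv) K) (b : Fin mv → B),
      (∀ v, eval v D ≠ 0) ∧ aeval b D = 0 := by
  by_cases hK : IsAlgClosed K
  · have : Subsingleton B := not_nontrivial_iff_subsingleton.mp fun _ =>
      hB.elim (IsAlgClosed.nonempty_algHom_of_finiteType K B).some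
    exact ⟨0, 1, 0, fun _ => by simp, Subsingleton.elim _ _⟩
  obtain ⟨p, hp, hroot⟩ := exists_rootless_of_not_isAlgClosed hK
  obtain ⟨M, ψ, hψ, hker⟩ := (Algebra.FinitePresentation.of_finiteType (R := K)).mp ‹_›
  obtain ⟨r, f, hf⟩ := Submodule.fg_iff_exists_fin_generating_family.mp hker
  replace hf : Ideal.span (Set.range f) = RingHom.ker ψ := hf
  have hfψ : ∀ i, ψ (f i) = 0 := fun i => by
    rw [← RingHom.mem_ker, ← hf]
    exact Ideal.subset_span ⟨i, rfl⟩
  refine ⟨M, bind₁ f (p.anisotropicForm r), ψ ∘ X, fun v hv => ?_, ?_⟩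
  · have hfv : (fun i => eval v (f i)) = 0 := by
      rw [MvPolynomial.eval, eval₂Hom_bind₁, ← MvPolynomial.eval] at hv
      exact (Polynomial.eval_anisotropicForm_eq_zero_iff hp hroot _).mp hv
    refine hB.elim (nonempty_algHom_of_ker_le hψ (aeval v) ?_).some
    rw [← hf, Ideal.span_le]
    rintro _ ⟨i, rfl⟩
    exact congr_fun hfv i
  · rw [aeval_bind₁, ← aeval_unique ψ]
    simp only [hfψ]
    rw [← Pi.zero_def, aeval_zero, ← MvPolynomial.eval_zero,
      (Polynomial.eval_anisotropicForm_eq_zero_iff hp hroot 0).mpr rfl, map_zero]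

section equiradical

variable {k A}

theorem mem_sInf_specialMaximal_iff (I : Ideal A) (a : A) :
    a ∈ sInf {m : Ideal A | I ≤ m ∧ m.IsMaximal ∧ Function.Bijective (algebraMap k (A ⧸ m))} ↔
      ∀ φ : A →ₐ[k] k, I ≤ RingHom.ker φ → φ a = 0 := by
  refine ⟨fun ha φ hI => Ideal.mem_sInf.mp ha ⟨hI, ?_⟩, fun h => Ideal.mem_sInf.mpr ?_⟩
  · have hφ : Function.Surjective φ := fun c => ⟨algebraMap k A c, by simp⟩
    let e := Ideal.quotientKerAlgEquivOfSurjective hφ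
    have he : ⇑(algebraMap k (A ⧸ RingHom.ker φ)) = e.symm := funext fun c => by simp
    exact ⟨RingHom.ker_isMaximal_of_surjective φ hφ, he ▸ e.symm.bijective⟩
  · rintro m ⟨hI, -, hbij⟩
    let e := (AlgEquiv.ofBijective (Algebra.ofId k (A ⧸ m)) hbij).symm
    have hφ := h (e.toAlgHom.comp (Ideal.Quotient.mkₐ k m)) fun x hx => by
      simp [Ideal.Quotient.eq_zero_iff_mem.mpr (hI hx)]
    simpa [Ideal.Quotient.eq_zero_iff_mem] using hφ

theorem map_ne_zero_of_mem_closure_sigmaSet (φ : A →ₐ[k] k) {a x : A} (ha : φ a ≠ 0)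
    (hx : x ∈ Submonoid.closure (sigmaSet k A a)) : φ x ≠ 0 := by
  induction hx using Submonoid.closure_induction with
  | mem x hx =>
    obtain ⟨m, n, mv, D, b, hD, rfl⟩ := hx
    rw [map_mul, map_homogEval, map_pow, map_pow]
    exact mul_ne_zero (pow_ne_zero _ ha) (homogEval_ne_zero hD _ (pow_ne_zero _ ha))
  | one => simp
  | mul x y _ _ hx hy => rw [map_mul]; exact mul_ne_zero hx hy

theorem isEmpty_algHom_localization {I : Ideal A} {a : A}
    (ha : ∀ φ : A →ₐ[k] k, I ≤ RingHom.ker φ → φ a = 0) :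
    IsEmpty (Localization.Away (Ideal.Quotient.mk I a) →ₐ[k] k) := by
  refine ⟨fun χ => ?_⟩
  let φ := χ.comp (IsScalarTower.toAlgHom k A (Localization.Away (Ideal.Quotient.mk I a)))
  have hI : I ≤ RingHom.ker φ := fun x hx => by
    simp [φ, IsScalarTower.algebraMap_apply A (A ⧸ I), Ideal.Quotient.eq_zero_iff_mem.mpr hx]
  exact ((IsLocalization.Away.algebraMap_isUnit (Ideal.Quotient.mk I a)).map χ).ne_zero (ha φ hI)

theorem exists_pow_mul_homogEval_mem {I : Ideal A} {a : A} {mv : ℕ}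
    (D : MvPolynomial (Fin mv) k) (b : Fin mv → Localization.Away (Ideal.Quotient.mk I a))
    (hb : aeval b D = 0) : ∃ (m n : ℕ) (d : Fin mv → A), a ^ m * homogEval k A D d (a ^ n) ∈ I := by
  let π := IsScalarTower.toAlgHom k A (Localization.Away (Ideal.Quotient.mk I a))
  obtain ⟨⟨_, n, rfl⟩, hn⟩ :=
    IsLocalization.exist_integer_multiples_of_finite (Submonoid.powers (Ideal.Quotient.mk I a)) b
  choose y hy using hn
  choose d hd using fun i => Ideal.Quotient.mk_surjective (y i)
  have hπd : π ∘ d = fun i => π (a ^ n) * b i := funext fun i => by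
    simp [π, IsScalarTower.algebraMap_apply A (A ⧸ I), hd, hy, Algebra.smul_def]
  have h0 : π (homogEval k A D d (a ^ n)) = 0 := by
    rw [map_homogEval, hπd, homogEval_mul_left, hb, mul_zero]
  rw [IsScalarTower.coe_toAlgHom', IsScalarTower.algebraMap_apply A (A ⧸ I),
    IsLocalization.map_eq_zero_iff (Submonoid.powers (Ideal.Quotient.mk I a))] at h0
  obtain ⟨⟨_, m, rfl⟩, hm⟩ := h0
  refine ⟨m, n, d, Ideal.Quotient.eq_zero_iff_mem.mp ?_⟩
  simpa using hm

end equiradical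

/-- Let `A` be a finitely generated algebra over a field `k` and `I` an ideal of `A`.  Then
the equiradical of `I` — the intersection of all maximal ideals `m ⊇ I` with `A/m ≅ k` —
equals the set of `a ∈ A` such that `I` meets the multiplicative set `Σ_a`. -/
theorem equiradical_eq_sigma (hfg : Algebra.FiniteType k A) (I : Ideal A) (a : A) :
    a ∈ sInf {m : Ideal A | I ≤ m ∧ m.IsMaximal ∧
        Function.Bijective (algebraMap k (A ⧸ m))} ↔
      ∃ x, x ∈ Submonoid.closure (sigmaSet k A a) ∧ x ∈ I := by
  rw [mem_sInf_specialMaximal_iff]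
  constructor
  · intro ha
    have := hfg
    obtain ⟨mv, D, b, hD, hb⟩ := exists_aeval_eq_zero_of_isEmpty_algHom (isEmpty_algHom_localization ha)
    obtain ⟨m, n, d, hmem⟩ := exists_pow_mul_homogEval_mem D b hb
    exact ⟨_, Submonoid.subset_closure ⟨m, n, mv, D, d, hD, rfl⟩, hmem⟩
  · rintro ⟨x, hx, hxI⟩ φ hφ
    by_contra ha
    exact map_ne_zero_of_mem_closure_sigmaSet φ ha hx (hφ hxI)
end

section
/- An ideal I of a k-algebra A equals its equiradical (intersection of all maximal ideals m ⊇ I with A/m ≅ k) if and only if the quotient A/I embeds as a k-algebra into a power k^S of k for some set S. -/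
/-!
The `k`-algebra maps `A → k` are exactly the quotient maps by the special maximal ideals, and
those vanishing on `I` are the maps `A / I → k`. So `I` is the intersection of the special
maximal ideals containing it iff the maps `A / I → k` jointly have zero kernel, which says that
the product of all of them is an embedding of `A / I` into a power of `k`.
-/

open Function RingHom

section Characters

variable {k A : Type*} [CommSemiring k] [CommRing A] [Algebra k A]

theorem AlgHom.surjective_into_base (χ : A →ₐ[k] k) : Surjective χ :=
  fun c => ⟨algebraMap k A c, χ.commutes c⟩

theorem bijective_algebraMap_quotient_iff_exists_ker_eq (m : Ideal A) :
    Bijective (algebraMap k (A ⧸ m)) ↔ ∃ χ : A →ₐ[k] k, ker χ = m := by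
  constructor
  · intro h
    refine ⟨(AlgEquiv.ofBijective (Algebra.ofId k _) h).symm.toAlgHom.comp
      (Ideal.Quotient.mkₐ k m), ?_⟩
    rw [AlgHom.ker_coe, AlgHom.comp_toRingHom, ker_comp_of_injective _ (AlgEquiv.injective _),
      Ideal.Quotient.mkₐ_ker]
  · rintro ⟨χ, rfl⟩
    have e := Ideal.quotientKerAlgEquivOfSurjective χ.surjective_into_base
    convert e.symm.bijective
    ext c
    exact (e.symm.commutes c).symm

end Characters

theorem exists_injective_algHom_pi_iff_iInf_ker_eq_bot (k B : Type) [CommSemiring k] [Ring B]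
    [Algebra k B] :
    (∃ (S : Type) (φ : B →ₐ[k] (S → k)), Injective φ) ↔ ⨅ χ : B →ₐ[k] k, ker χ = ⊥ := by
  constructor
  · rintro ⟨S, φ, hφ⟩
    refine eq_bot_iff.2 fun b hb => (Submodule.mem_bot _).2 (hφ ?_)
    rw [map_zero]
    funext s
    exact Ideal.mem_iInf.1 hb ((Pi.evalAlgHom k _ s).comp φ)
  · intro h
    refine ⟨B →ₐ[k] k, AlgHom.pi fun χ => χ, ?_⟩
    rw [injective_iff_ker_eq_bot, ← h]
    ext b
    simp [mem_ker, funext_iff]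

theorem setOf_le_isMaximal_bijective_algebraMap_eq_range {k A : Type*} [Field k] [CommRing A]
    [Algebra k A] (I : Ideal A) :
    {m : Ideal A | I ≤ m ∧ m.IsMaximal ∧ Bijective (algebraMap k (A ⧸ m))} =
      Set.range fun χ : A ⧸ I →ₐ[k] k => (ker χ).comap (Ideal.Quotient.mk I) := by
  ext m
  constructor
  · rintro ⟨hIm, -, hm⟩
    obtain ⟨χ, rfl⟩ := (bijective_algebraMap_quotient_iff_exists_ker_eq m).1 hm
    refine ⟨Ideal.Quotient.liftₐ I χ fun a ha => mem_ker.1 (hIm ha), ?_⟩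
    ext a
    exact Iff.rfl
  · rintro ⟨χ, rfl⟩
    set ψ := χ.comp (Ideal.Quotient.mkₐ k I)
    have hψ : (ker χ).comap (Ideal.Quotient.mk I) = ker ψ := comap_ker _ _
    dsimp only
    rw [hψ]
    refine ⟨fun a ha => ?_, ker_isMaximal_of_surjective ψ ψ.surjective_into_base,
      (bijective_algebraMap_quotient_iff_exists_ker_eq _).2 ⟨ψ, rfl⟩⟩
    simp [ψ, mem_ker, Ideal.Quotient.eq_zero_iff_mem.2 ha]

/-- An ideal `I` of a `k`-algebra `A` equals its equiradical (the intersection of all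
maximal ideals `m ⊇ I` with `A/m ≅ k`) if and only if the quotient `A/I` embeds as a
`k`-algebra into a power `k^S` of `k` for some set `S`. -/
theorem special_ideal_iff_quotient_embeds (k A : Type) [Field k] [CommRing A] [Algebra k A]
    (I : Ideal A) :
    I = sInf {m : Ideal A | I ≤ m ∧ m.IsMaximal ∧
        Function.Bijective (algebraMap k (A ⧸ m))} ↔
      ∃ (S : Type) (φ : (A ⧸ I) →ₐ[k] (S → k)), Function.Injective φ := by
  have hI : (⊥ : Ideal (A ⧸ I)).comap (Ideal.Quotient.mk I) = I := by
    rw [← ker_eq_comap_bot, Ideal.mk_ker]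
  rw [setOf_le_isMaximal_bijective_algebraMap_eq_range, sInf_range, ← Ideal.comap_iInf,
    exists_injective_algHom_pi_iff_iInf_ker_eq_bot, eq_comm,
    ← (Ideal.comap_injective_of_surjective _ Ideal.Quotient.mk_surjective).eq_iff, hI]
end
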